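/- Let (ℰ, D) be a strictly local regular Dirichlet form on X such that for every closed set E the distance function ρ_E lies in D_loc with dΓ(ρ_E) ≤ dm, and assume the chain rule for Γ. Then for any compact K ⊂ X and any compact L containing K in its interior, there exists φ ∈ C_c(X) ∩ D with 0 ≤ φ, φ ≡ 1 on K, supp φ ⊂ L, and dΓ(φ) ≤ C·dm for some constant C > 0. -/

import Mathlib

open MeasureTheory

/-- Monotonicity of `withDensity` in the measure argument. -/
lemma withDensity_measure_mono {X : Type*} [MeasurableSpace X] {μ ν : Measure X}
    (h : μ ≤ ν) (f : X → ENNReal) : μ.withDensity f ≤ ν.withDensity f := by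
  refine Measure.le_iff.2 fun s hs => ?_
  rw [withDensity_apply _ hs, withDensity_apply _ hs]
  exact lintegral_mono' (Measure.restrict_mono subset_rfl h) le_rfl

/-- The derivative of `Real.smoothTransition` has compact support. -/
lemma smoothTransition_deriv_compactSupport :
    HasCompactSupport (deriv Real.smoothTransition) := by
  have hsub : Function.support (deriv Real.smoothTransition) ⊆ Set.Icc (0:ℝ) 1 := by
    intro y hy
    by_contra hy'
    apply hy
    rcases not_and_or.1 ((Set.mem_Icc).not.1 hy') with h | h
    · push_neg at h
      have : Real.smoothTransition =ᶠ[nhds y] (fun _ => 0) := by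
        filter_upwards [IsOpen.mem_nhds isOpen_Iio h] with t ht
        exact Real.smoothTransition.zero_of_nonpos (le_of_lt ht)
      rw [this.deriv_eq, deriv_const]
    · push_neg at h
      have : Real.smoothTransition =ᶠ[nhds y] (fun _ => 1) := by
        filter_upwards [IsOpen.mem_nhds isOpen_Ioi h] with t ht
        exact Real.smoothTransition.one_of_one_le (le_of_lt ht)
      rw [this.deriv_eq, deriv_const]
  exact IsCompact.of_isClosed_subset isCompact_Icc (isClosed_tsupport _)
    (closure_minimal hsub isClosed_Icc)

/-- Lemma 1.4 (good cut-off functions): for a strictly local regular Dirichlet form whose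
intrinsic metric induces the topology, given compacts `K ⊆ interior L` there is
`φ ∈ C_c(X) ∩ D` with `0 ≤ φ`, `φ ≡ 1` on `K`, `supp φ ⊆ L` and `dΓ(φ) ≤ C dm`. -/
theorem good_cutoff_exists
    {X : Type*} [MetricSpace X] [MeasurableSpace X] [BorelSpace X] (m : Measure X)
    (D Dloc : Set (X → ℝ)) (Γ : (X → ℝ) → Measure X)
    -- chain rule for the energy measure
    (hchain : ∀ ζ : ℝ → ℝ, ContDiff ℝ 1 ζ → ∀ u ∈ Dloc,
      (ζ ∘ u) ∈ Dloc ∧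
      Γ (ζ ∘ u) = (Γ u).withDensity (fun x => ENNReal.ofReal ((deriv ζ (u x)) ^ 2)))
    -- distance functions to closed sets lie in D_loc with dΓ(ρ_E) ≤ dm
    (hdist : ∀ E : Set X, IsClosed E →
      (fun x => Metric.infDist x E) ∈ Dloc ∧ Γ (fun x => Metric.infDist x E) ≤ m)
    -- continuous, compactly supported functions of D_loc belong to D
    (hmemD : ∀ u, u ∈ Dloc → Continuous u → HasCompactSupport u → u ∈ D)
    (K L : Set X) (hK : IsCompact K) (hL : IsCompact L) (hKL : K ⊆ interior L) :
    ∃ (φ : X → ℝ) (C : NNReal), 0 < C ∧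
      Continuous φ ∧ HasCompactSupport φ ∧ φ ∈ D ∧
      (∀ x, 0 ≤ φ x) ∧ (∀ x ∈ K, φ x = 1) ∧ tsupport φ ⊆ L ∧
      Γ φ ≤ (C : ENNReal) • m := by
  rcases K.eq_empty_or_nonempty with rfl | hKne
  · -- `K = ∅`: take `φ = 0`.
    obtain ⟨hu, -⟩ := hdist Set.univ isClosed_univ
    obtain ⟨h0mem, h0Γ⟩ := hchain (fun _ => 0) contDiff_const _ hu
    have hzero : ((fun _ => (0:ℝ)) ∘ fun x => Metric.infDist x Set.univ)
        = fun _ : X => (0:ℝ) := rfl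
    rw [hzero] at h0mem h0Γ
    have htsupp : tsupport (fun _ : X => (0:ℝ)) = ∅ := by
      simp [tsupport, Function.support]
    have hcs : HasCompactSupport (fun _ : X => (0:ℝ)) := by
      rw [HasCompactSupport, htsupp]; exact isCompact_empty
    refine ⟨fun _ => 0, 1, one_pos, continuous_const, hcs,
      hmemD _ h0mem continuous_const hcs, fun _ => le_rfl, by simp, by simp [htsupp], ?_⟩
    rw [h0Γ]
    have : (fun x : X => ENNReal.ofReal ((deriv (fun _ : ℝ => (0:ℝ))
        (Metric.infDist x Set.univ)) ^ 2)) = fun _ => 0 := by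
      funext x; simp
    rw [this, show (fun _ : X => (0:ENNReal)) = 0 from rfl, withDensity_zero]
    exact Measure.zero_le _
  · obtain ⟨r, hr, hthick⟩ := hK.exists_thickening_subset_open isOpen_interior hKL
    set ρ : X → ℝ := fun x => Metric.infDist x K with hρdef
    obtain ⟨hρmem, hρΓ⟩ := hdist K hK.isClosed
    set ζ : ℝ → ℝ := fun t => Real.smoothTransition ((r / 2 - t) * (4 / r)) with hζdef
    have hζcd : ContDiff ℝ 1 ζ :=
      Real.smoothTransition.contDiff.comp ((contDiff_const.sub contDiff_id).mul contDiff_const)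
    -- bound on the derivative of smoothTransition
    obtain ⟨M, hM⟩ := smoothTransition_deriv_compactSupport.exists_bound_of_continuous
      (Real.smoothTransition.contDiff.continuous_deriv le_rfl)
    have hMnn : 0 ≤ M := le_trans (norm_nonneg _) (hM 0)
    -- derivative of ζ
    have hζderiv : ∀ t : ℝ, deriv ζ t
        = deriv Real.smoothTransition ((r / 2 - t) * (4 / r)) * (-1 * (4 / r)) := by
      intro t
      have hl : HasDerivAt (fun t : ℝ => (r / 2 - t) * (4 / r)) (-1 * (4 / r)) t := by
        have := ((hasDerivAt_id t).const_sub (r / 2)).mul_const (4 / r)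
        simpa using this
      have hs : HasDerivAt Real.smoothTransition
          (deriv Real.smoothTransition ((r / 2 - t) * (4 / r))) ((r / 2 - t) * (4 / r)) :=
        (((Real.smoothTransition.contDiff (n := 1)).differentiable one_ne_zero) _).hasDerivAt
      exact (hs.comp t hl).deriv
    have hζbound : ∀ t : ℝ, (deriv ζ t) ^ 2 ≤ (M * (4 / r)) ^ 2 := by
      intro t
      have h1 : |deriv ζ t| ≤ M * (4 / r) := by
        rw [hζderiv t, abs_mul]
        have h2 : |(-1 : ℝ) * (4 / r)| = 4 / r := by
          rw [abs_mul, abs_neg, abs_one, one_mul, abs_of_pos (by positivity)]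
        rw [h2]
        exact mul_le_mul_of_nonneg_right (by simpa using hM ((r / 2 - t) * (4 / r)))
          (by positivity)
      calc (deriv ζ t) ^ 2 = |deriv ζ t| ^ 2 := (sq_abs _).symm
        _ ≤ (M * (4 / r)) ^ 2 := by
            exact pow_le_pow_left₀ (abs_nonneg _) h1 2
    set Creal : ℝ := (M * (4 / r)) ^ 2 + 1 with hCdef
    have hCpos : 0 < Creal := by positivity
    obtain ⟨hφmem, hφΓ⟩ := hchain ζ hζcd _ hρmem
    have hφcont : Continuous (ζ ∘ ρ) :=
      hζcd.continuous.comp (Metric.continuous_infDist_pt K)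
    have hsubL : tsupport (ζ ∘ ρ) ⊆ L := by
      have hsupp : Function.support (ζ ∘ ρ) ⊆ {x | ρ x ≤ r / 2} := by
        intro x hx
        simp only [Function.mem_support, Function.comp_apply, hζdef] at hx
        by_contra hxr
        simp only [Set.mem_setOf_eq, not_le] at hxr
        exact hx (Real.smoothTransition.zero_of_nonpos
          (mul_nonpos_of_nonpos_of_nonneg (by linarith) (by positivity)))
      have hclosed : IsClosed {x : X | ρ x ≤ r / 2} :=
        isClosed_le (Metric.continuous_infDist_pt K) continuous_const
      refine (closure_minimal hsupp hclosed).trans ?_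
      intro x hx
      have : x ∈ Metric.thickening r K :=
        (Metric.mem_thickening_iff_infDist_lt hKne).2 (lt_of_le_of_lt hx (by linarith))
      exact interior_subset (hthick this)
    have hφcs : HasCompactSupport (ζ ∘ ρ) :=
      IsCompact.of_isClosed_subset hL (isClosed_tsupport _) hsubL
    refine ⟨ζ ∘ ρ, Creal.toNNReal, Real.toNNReal_pos.2 hCpos, hφcont, hφcs,
      hmemD _ hφmem hφcont hφcs, fun x => Real.smoothTransition.nonneg _, ?_, hsubL, ?_⟩
    · intro x hx
      have hx0 : ρ x = 0 := Metric.infDist_zero_of_mem hx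
      simp only [Function.comp_apply, hζdef, hx0, sub_zero]
      refine Real.smoothTransition.one_of_one_le ?_
      rw [show r / 2 * (4 / r) = 2 by field_simp; ring]
      norm_num
    · rw [hφΓ]
      have step1 : (Γ ρ).withDensity (fun x => ENNReal.ofReal ((deriv ζ (ρ x)) ^ 2))
          ≤ m.withDensity (fun x => ENNReal.ofReal ((deriv ζ (ρ x)) ^ 2)) :=
        withDensity_measure_mono hρΓ _
      have step2 : m.withDensity (fun x => ENNReal.ofReal ((deriv ζ (ρ x)) ^ 2))
          ≤ m.withDensity (fun _ => (Creal.toNNReal : ENNReal)) := by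
        refine withDensity_mono (Filter.Eventually.of_forall fun x => ?_)
        have h : (Creal.toNNReal : ENNReal) = ENNReal.ofReal Creal := rfl
        rw [h]
        exact ENNReal.ofReal_le_ofReal (le_trans (hζbound (ρ x)) (by linarith))
      calc (Γ ρ).withDensity (fun x => ENNReal.ofReal ((deriv ζ (ρ x)) ^ 2))
          ≤ m.withDensity (fun _ => (Creal.toNNReal : ENNReal)) := step1.trans step2
        _ = (Creal.toNNReal : ENNReal) • m := withDensity_const _
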